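/- Let (M, d) be a proper geodesic metric space and let γ be a line in M with the uniqueness property. If γ₁ and γ₂ are lines with γ₁ ≺ γ and γ₂ ≺ γ, then γ₁ ∼ γ₂ if and only if B_{γ₁}(x) = B_{γ₂}(x) for all x ∈ M. -/

import Mathlib

open Filter Topology

variable {M : Type*} [MetricSpace M]

/-- A ray in a metric space: a map `γ` defined (in effect) on `[0, ∞)` with
`d(γ s, γ t) = |s - t|` for all `s, t ≥ 0`. -/
def IsRay (γ : ℝ → M) : Prop :=
  ∀ s t : ℝ, 0 ≤ s → 0 ≤ t → dist (γ s) (γ t) = |s - t|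

/-- A line in a metric space: a map `γ : ℝ → M` with `d(γ s, γ t) = |s - t|`. -/
def IsLine (γ : ℝ → M) : Prop :=
  ∀ s t : ℝ, dist (γ s) (γ t) = |s - t|

/-- The Busemann function of a ray `γ`:
`b_γ(x) = lim_{t → ∞} (d(x, γ t) - t)`, which exists and equals the infimum
since `t ↦ d(x, γ t) - t` is nonincreasing on `[0, ∞)` and bounded below. -/
noncomputable def busemann (γ : ℝ → M) (x : M) : ℝ :=
  ⨅ t : Set.Ici (0 : ℝ), (dist x (γ t) - (t : ℝ))

/-- For a line `γ`, the negative ray `γ⁻(t) = γ(-t)`.  (The positive ray `γ⁺`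
is just `γ` itself, restricted to `[0, ∞)`.) -/
def negRay (γ : ℝ → M) : ℝ → M := fun t => γ (-t)

/-- The barrier function of a line `γ`: `B_γ = b_{γ⁺} + b_{γ⁻}`. -/
noncomputable def barrier (γ : ℝ → M) (x : M) : ℝ :=
  busemann γ x + busemann (negRay γ) x

/-- `γ' ≺ γ`: the barrier of `γ` vanishes at `γ' 0` and both Busemann functions
`b_{γ⁺}`, `b_{γ⁻}` calibrate `γ'` (every forward translate of `γ'` is a coray to
`γ⁺` and every backward translate is a coray to `γ⁻`). -/
def Prec (γ' γ : ℝ → M) : Prop :=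
  busemann γ (γ' 0) + busemann (negRay γ) (γ' 0) = 0 ∧
  ∀ t : ℝ, busemann γ (γ' t) = busemann γ (γ' 0) - t ∧
    busemann (negRay γ) (γ' t) = busemann (negRay γ) (γ' 0) + t

/-- A geodesic metric space: any two points are joined by a minimizing geodesic
segment. -/
def IsGeodesicSpace (M : Type*) [MetricSpace M] : Prop :=
  ∀ x y : M, ∃ σ : ℝ → M, σ 0 = x ∧ σ (dist x y) = y ∧
    ∀ s t : ℝ, s ∈ Set.Icc 0 (dist x y) → t ∈ Set.Icc 0 (dist x y) →
      dist (σ s) (σ t) = |s - t|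

/-- `γ'` is a coray to the ray `γ`: there are `tᵢ → ∞`, points `xᵢ → γ' 0` and
minimal geodesic segments `cᵢ` from `xᵢ` to `γ (tᵢ)` of length `Tᵢ = d(xᵢ, γ tᵢ) → ∞`
converging to `γ'` uniformly on compact subintervals of `[0, ∞)`. -/
def IsCoray (γ' γ : ℝ → M) : Prop :=
  ∃ (t : ℕ → ℝ) (x : ℕ → M) (c : ℕ → ℝ → M),
    (∀ i, 0 ≤ t i) ∧
    Tendsto t atTop atTop ∧
    Tendsto x atTop (𝓝 (γ' 0)) ∧
    (∀ i, c i 0 = x i) ∧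
    (∀ i, c i (dist (x i) (γ (t i))) = γ (t i)) ∧
    (∀ i, ∀ s s' : ℝ, s ∈ Set.Icc 0 (dist (x i) (γ (t i))) →
      s' ∈ Set.Icc 0 (dist (x i) (γ (t i))) → dist (c i s) (c i s') = |s - s'|) ∧
    Tendsto (fun i => dist (x i) (γ (t i))) atTop atTop ∧
    (∀ K > (0 : ℝ), ∀ ε > (0 : ℝ), ∃ N : ℕ, ∀ i ≥ N,
      ∀ s ∈ Set.Icc (0 : ℝ) K, dist (c i s) (γ' s) < ε)

/-- The line `γ` has the uniqueness property: through each point of the zero set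
of `B_γ` there is at most one line `γ''` with `γ'' ≺ γ`. -/
def HasUniqueCalibLine (γ : ℝ → M) : Prop :=
  ∀ x : M, barrier γ x = 0 →
    ∀ γ₁ γ₂ : ℝ → M, IsLine γ₁ → IsLine γ₂ → γ₁ 0 = x → γ₂ 0 = x →
      Prec γ₁ γ → Prec γ₂ γ → γ₁ = γ₂

/-!
If `γ₁ ≺ γ₂`, the Busemann functions of `γ₂` are calibrated along `γ₁`, which gives
`b_{γ₂^±} ≤ b_{γ₂^±}(γ₁ 0) + b_{γ₁^±}` and hence `B_{γ₂} ≤ B_{γ₁}`; so `γ₁ ∼ γ₂` forces equal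
barriers. Conversely, if the barriers agree then `γ₁ 0` is a zero of `B_{γ₂}`. In a proper
geodesic space, limits of geodesic segments from `γ₁ 0` to `γ₂ (±n)` are two rays through `γ₁ 0`
calibrated by `b_{γ₂^+}` and `b_{γ₂^-}`, and together they form a line `σ ≺ γ₂` with
`σ 0 = γ₁ 0`. As `≺` is transitive, `σ ≺ γ`, so the uniqueness property gives `σ = γ₁`.
-/

theorem negRay_apply {X : Type*} (γ : ℝ → X) (t : ℝ) : negRay γ t = γ (-t) := rfl

theorem negRay_negRay {X : Type*} (γ : ℝ → X) : negRay (negRay γ) = γ := by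
  funext t; rw [negRay_apply, negRay_apply, neg_neg]

variable {γ δ σ : ℝ → M}

theorem IsLine.isRay (h : IsLine γ) : IsRay γ := fun s t _ _ => h s t

theorem IsLine.reverse (h : IsLine γ) : IsLine (negRay γ) := fun s t =>
  (h (-s) (-t)).trans (by rw [neg_sub_neg, abs_sub_comm])

theorem barrier_negRay (γ : ℝ → M) : barrier (negRay γ) = barrier γ := by
  funext x; rw [barrier, barrier, negRay_negRay, add_comm]

theorem busemann_bddBelow (h : IsRay γ) (x : M) :
    BddBelow (Set.range fun t : Set.Ici (0 : ℝ) => dist x (γ t) - t) := by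
  refine ⟨-dist x (γ 0), ?_⟩
  rintro _ ⟨⟨t, ht⟩, rfl⟩
  have h₁ := h t 0 ht le_rfl
  rw [sub_zero, abs_of_nonneg ht] at h₁
  show -dist x (γ 0) ≤ dist x (γ t) - t
  linarith [dist_triangle_left (γ t) (γ 0) x]

theorem busemann_le (h : IsRay γ) (x : M) {t : ℝ} (ht : 0 ≤ t) :
    busemann γ x ≤ dist x (γ t) - t :=
  ciInf_le (busemann_bddBelow h x) ⟨t, ht⟩

theorem le_busemann {a : ℝ} {x : M} (h : ∀ t, 0 ≤ t → a ≤ dist x (γ t) - t) :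
    a ≤ busemann γ x :=
  le_ciInf fun t => h t t.2

theorem busemann_le_add_dist (h : IsRay γ) (x y : M) :
    busemann γ x ≤ busemann γ y + dist x y := by
  suffices busemann γ x - dist x y ≤ busemann γ y by linarith
  refine le_busemann fun t ht => ?_
  linarith [busemann_le h x ht, dist_triangle x y (γ t)]

theorem lipschitzWith_busemann (h : IsRay γ) : LipschitzWith 1 (busemann γ) :=
  LipschitzWith.of_le_add (busemann_le_add_dist h)

theorem abs_busemann_sub_le (h : IsRay γ) (x y : M) :
    |busemann γ x - busemann γ y| ≤ dist x y := by
  simpa [Real.dist_eq] using (lipschitzWith_busemann h).dist_le_mul x y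

theorem abs_sub_le_dist_of_busemann_eq (hγ : IsRay γ) {x y : M} {c s t : ℝ}
    (hs : busemann γ x = c - s) (ht : busemann γ y = c - t) : |s - t| ≤ dist x y :=
  calc |s - t| = |busemann γ x - busemann γ y| := by rw [hs, ht, ← abs_neg]; ring_nf
    _ ≤ dist x y := abs_busemann_sub_le hγ x y

theorem antitoneOn_dist_sub (h : IsRay γ) (x : M) :
    AntitoneOn (fun t => dist x (γ t) - t) (Set.Ici 0) := by
  intro s hs t ht hst
  have hd := h s t hs ht
  rw [abs_of_nonpos (by linarith)] at hd
  linarith [dist_triangle x (γ s) (γ t)]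

theorem tendsto_dist_sub_busemann (h : IsRay γ) (x : M) :
    Tendsto (fun t => dist x (γ t) - t) atTop (𝓝 (busemann γ x)) := by
  refine tendsto_order.2 ⟨fun a ha => ?_, fun a ha => ?_⟩
  · filter_upwards [eventually_ge_atTop 0] with t ht
    exact ha.trans_le (busemann_le h x ht)
  · obtain ⟨⟨t₀, ht₀⟩, hlt⟩ := exists_lt_of_ciInf_lt ha
    filter_upwards [eventually_ge_atTop t₀] with t ht
    exact (antitoneOn_dist_sub h x ht₀ (le_trans ht₀ ht) ht).trans_lt hlt

theorem busemann_apply_self (h : IsLine γ) (s : ℝ) : busemann γ (γ s) = -s := by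
  refine le_antisymm ?_ (le_busemann fun t _ => ?_)
  · have h₁ := busemann_le h.isRay (γ s) (le_max_right s 0)
    rw [h s (max s 0), abs_of_nonpos (by simp)] at h₁
    linarith [le_max_left s 0]
  · rw [h s t]
    linarith [neg_abs_le (s - t)]

theorem barrier_apply_self (h : IsLine γ) (s : ℝ) : barrier γ (γ s) = 0 := by
  have hneg := busemann_apply_self h.reverse (-s)
  rw [negRay_apply, neg_neg] at hneg
  rw [barrier, busemann_apply_self h, hneg, neg_add_cancel]

theorem barrier_nonneg (h : IsLine γ) (x : M) : 0 ≤ barrier γ x := by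
  suffices -busemann (negRay γ) x ≤ busemann γ x by rw [barrier]; linarith
  refine le_busemann fun t ht => ?_
  suffices t - dist x (γ t) ≤ busemann (negRay γ) x by linarith
  refine le_busemann fun s hs => ?_
  show t - dist x (γ t) ≤ dist x (γ (-s)) - s
  have hd := h t (-s)
  rw [sub_neg_eq_add, abs_of_nonneg (by linarith)] at hd
  linarith [dist_triangle_left (γ t) (γ (-s)) x]

theorem Prec.reverse (h : Prec δ γ) : Prec (negRay δ) (negRay γ) := by
  refine ⟨by rw [negRay_negRay, negRay_apply, neg_zero, add_comm]; exact h.1, fun t => ?_⟩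
  obtain ⟨hpos, hneg⟩ := h.2 (-t)
  rw [negRay_negRay, negRay_apply, negRay_apply, neg_zero, hpos, hneg]
  constructor <;> ring

theorem Prec.busemann_le (h : Prec δ γ) (hγ : IsRay γ) (x : M) :
    busemann γ x ≤ busemann γ (δ 0) + busemann δ x := by
  suffices busemann γ x - busemann γ (δ 0) ≤ busemann δ x by linarith
  refine le_busemann fun t _ => ?_
  linarith [busemann_le_add_dist hγ x (δ t), (h.2 t).1]

theorem Prec.barrier_le (h : Prec δ γ) (hγ : IsLine γ) (x : M) : barrier γ x ≤ barrier δ x := by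
  have hpos := h.busemann_le hγ.isRay x
  have hneg := h.reverse.busemann_le hγ.reverse.isRay x
  rw [negRay_apply, neg_zero] at hneg
  rw [barrier, barrier]
  linarith [h.1]

/-- Along `σ`, the inequalities of `Prec.busemann_le` add up to `B_γ ≤ 0`, so by
`barrier_nonneg` both are equalities. -/
theorem Prec.trans (hσδ : Prec σ δ) (hδγ : Prec δ γ) (hγ : IsLine γ) : Prec σ γ := by
  have key : ∀ t, busemann γ (σ t) = busemann γ (δ 0) + busemann δ (σ 0) - t ∧
      busemann (negRay γ) (σ t) = busemann (negRay γ) (δ 0) + busemann (negRay δ) (σ 0) + t := by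
    intro t
    have hpos := hδγ.busemann_le hγ.isRay (σ t)
    have hneg := hδγ.reverse.busemann_le hγ.reverse.isRay (σ t)
    have hB := barrier_nonneg hγ (σ t)
    rw [barrier] at hB
    rw [negRay_apply, neg_zero] at hneg
    obtain ⟨hσpos, hσneg⟩ := hσδ.2 t
    constructor <;> linarith [hσδ.1, hδγ.1]
  refine ⟨?_, fun t => ⟨?_, ?_⟩⟩
  · linarith [(key 0).1, (key 0).2, hσδ.1, hδγ.1]
  · linarith [(key t).1, (key 0).1]
  · linarith [(key t).2, (key 0).2]

/-- An ultrafilter finer than `l` stands in for a diagonal subsequence: it makes all the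
families `f · t` converge at once. -/
theorem exists_ultrafilter_tendsto_of_eventually_mem_compact {X ι T : Type*}
    [TopologicalSpace X] {l : Filter ι} [l.NeBot] {f : ι → T → X}
    (hf : ∀ t, ∃ K, IsCompact K ∧ ∀ᶠ i in l, f i t ∈ K) :
    ∃ U : Ultrafilter ι, ↑U ≤ l ∧ ∃ σ : T → X, ∀ t, Tendsto (fun i => f i t) U (𝓝 (σ t)) := by
  refine ⟨Ultrafilter.of l, Ultrafilter.of_le l, ?_⟩
  have hlim : ∀ t, ∃ p, Tendsto (fun i => f i t) (Ultrafilter.of l) (𝓝 p) := fun t => by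
    obtain ⟨K, hK, hfK⟩ := hf t
    obtain ⟨p, -, hp⟩ := hK.ultrafilter_le_nhds ((Ultrafilter.of l).map (f · t))
      (le_principal_iff.2 (Ultrafilter.of_le l hfK))
    exact ⟨p, hp⟩
  choose σ hσ using hlim
  exact ⟨σ, hσ⟩

theorem exists_isRay_busemann_eq [ProperSpace M] (hM : IsGeodesicSpace M) (hγ : IsRay γ)
    (x : M) :
    ∃ ρ : ℝ → M, IsRay ρ ∧ ρ 0 = x ∧ ∀ t, 0 ≤ t → busemann γ (ρ t) = busemann γ x - t := by
  choose c hc₀ hc₁ hc using fun n : ℕ => hM x (γ n)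
  have hLb : Tendsto (fun n : ℕ => dist x (γ n) - n) atTop (𝓝 (busemann γ x)) :=
    (tendsto_dist_sub_busemann hγ x).comp tendsto_natCast_atTop_atTop
  have hL : Tendsto (fun n : ℕ => dist x (γ n)) atTop atTop := by
    simpa using hLb.add_atTop tendsto_natCast_atTop_atTop
  have hmem : ∀ t, 0 ≤ t → ∀ᶠ n : ℕ in atTop, t ∈ Set.Icc 0 (dist x (γ n)) := fun t ht =>
    (hL.eventually_ge_atTop t).mono fun n hn => ⟨ht, hn⟩
  have hdist₀ : ∀ (n : ℕ) t, t ∈ Set.Icc 0 (dist x (γ n)) → dist (c n t) x = t :=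
    fun n t ht => by rw [← hc₀ n, hc n t 0 ht ⟨le_rfl, dist_nonneg⟩, sub_zero, abs_of_nonneg ht.1]
  -- `c n` is only controlled on `[0, dist x (γ n)]`; clamping at `0` bounds every parameter.
  obtain ⟨U, hU, ρ, hρ⟩ := exists_ultrafilter_tendsto_of_eventually_mem_compact
    (f := fun n t => c n (max t 0)) fun t => ⟨_, isCompact_closedBall x (max t 0),
      (hmem _ (le_max_right t 0)).mono fun n hn => (hdist₀ n _ hn).le⟩
  have hlim : ∀ t, 0 ≤ t → Tendsto (fun n => c n t) U (𝓝 (ρ t)) := fun t ht => by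
    simpa only [max_eq_left ht] using hρ t
  have hρ₀ : ρ 0 = x :=
    tendsto_nhds_unique (hlim 0 le_rfl) (by simp only [hc₀, tendsto_const_nhds])
  have hρ_le : ∀ s t, 0 ≤ s → 0 ≤ t → dist (ρ s) (ρ t) ≤ |s - t| := fun s t hs ht =>
    le_of_tendsto ((hlim s hs).dist (hlim t ht))
      (hU (((hmem s hs).and (hmem t ht)).mono fun n hn => (hc n s t hn.1 hn.2).le))
  have hb_le : ∀ t, 0 ≤ t → busemann γ (ρ t) ≤ busemann γ x - t := fun t ht => by
    refine le_of_tendsto_of_tendsto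
      (((lipschitzWith_busemann hγ).continuous.tendsto _).comp (hlim t ht))
      ((hLb.mono_left hU).sub_const t) (hU ((hmem t ht).mono fun n hn => ?_))
    have hend := hc n t _ hn ⟨dist_nonneg, le_rfl⟩
    rw [hc₁ n, abs_of_nonpos (by linarith [hn.2])] at hend
    have := busemann_le hγ (c n t) (Nat.cast_nonneg n)
    simp only [Function.comp_apply]
    linarith
  have hb : ∀ t, 0 ≤ t → busemann γ (ρ t) = busemann γ x - t := fun t ht => by
    have hxρ := hρ₀ ▸ hρ_le 0 t le_rfl ht
    rw [zero_sub, abs_neg, abs_of_nonneg ht] at hxρ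
    linarith [hb_le t ht, busemann_le_add_dist hγ x (ρ t)]
  exact ⟨ρ, fun s t hs ht => le_antisymm (hρ_le s t hs ht)
    (abs_sub_le_dist_of_busemann_eq hγ (hb s hs) (hb t ht)), hρ₀, hb⟩

theorem busemann_negRay_eq_of_busemann_eq (hδ : IsLine δ) {x y : M} {s : ℝ}
    (hx : barrier δ x = 0) (hxy : dist x y ≤ s) (hy : busemann δ y = busemann δ x - s) :
    busemann (negRay δ) y = busemann (negRay δ) x + s := by
  have hB := barrier_nonneg hδ y
  rw [barrier] at hx hB
  linarith [busemann_le_add_dist hδ.reverse.isRay y x, dist_comm x y]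

noncomputable def joinRays {X : Type*} (ρ ρ' : ℝ → X) : ℝ → X := fun t =>
  if 0 ≤ t then ρ t else ρ' (-t)

theorem joinRays_of_nonneg {X : Type*} {ρ ρ' : ℝ → X} {t : ℝ} (ht : 0 ≤ t) :
    joinRays ρ ρ' t = ρ t :=
  if_pos ht

theorem joinRays_of_neg {X : Type*} {ρ ρ' : ℝ → X} {t : ℝ} (ht : t < 0) :
    joinRays ρ ρ' t = ρ' (-t) :=
  if_neg ht.not_ge

theorem dist_joinRays_le {ρ ρ' : ℝ → M} (hρ : IsRay ρ) (hρ' : IsRay ρ') (h₀ : ρ 0 = ρ' 0)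
    (s t : ℝ) :
    dist (joinRays ρ ρ' s) (joinRays ρ ρ' t) ≤ |s - t| := by
  have hmixed : ∀ s t, 0 ≤ s → t < 0 → dist (ρ s) (ρ' (-t)) ≤ |s - t| := fun s t hs ht =>
    calc dist (ρ s) (ρ' (-t)) ≤ dist (ρ s) (ρ 0) + dist (ρ' 0) (ρ' (-t)) :=
          h₀ ▸ dist_triangle _ _ _
      _ = |s - t| := by
        rw [hρ s 0 hs le_rfl, hρ' 0 (-t) le_rfl (by linarith), sub_zero, zero_sub, neg_neg,
          abs_of_nonneg hs, abs_of_neg ht, abs_of_nonneg (by linarith : 0 ≤ s - t)]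
        ring
  rcases le_or_gt 0 s with hs | hs <;> rcases le_or_gt 0 t with ht | ht
  · rw [joinRays_of_nonneg hs, joinRays_of_nonneg ht]; exact (hρ s t hs ht).le
  · rw [joinRays_of_nonneg hs, joinRays_of_neg ht]; exact hmixed s t hs ht
  · rw [joinRays_of_neg hs, joinRays_of_nonneg ht, dist_comm, abs_sub_comm]
    exact hmixed t s ht hs
  · rw [joinRays_of_neg hs, joinRays_of_neg ht, hρ' _ _ (by linarith) (by linarith), neg_sub_neg,
      abs_sub_comm]

theorem exists_isLine_prec_of_barrier_eq_zero [ProperSpace M] (hM : IsGeodesicSpace M)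
    (hδ : IsLine δ) {x : M} (hx : barrier δ x = 0) :
    ∃ σ : ℝ → M, IsLine σ ∧ σ 0 = x ∧ Prec σ δ := by
  obtain ⟨ρ, hρ, hρ₀, hbρ⟩ := exists_isRay_busemann_eq hM hδ.isRay x
  obtain ⟨ρ', hρ', hρ'₀, hbρ'⟩ := exists_isRay_busemann_eq hM hδ.reverse.isRay x
  have hσ_le := dist_joinRays_le hρ hρ' (hρ₀.trans hρ'₀.symm)
  set σ := joinRays ρ ρ'
  have hσ₀ : σ 0 = x := (joinRays_of_nonneg le_rfl).trans hρ₀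
  have hb : ∀ t, busemann δ (σ t) = busemann δ x - t ∧
      busemann (negRay δ) (σ t) = busemann (negRay δ) x + t := by
    intro t
    have hxσ : dist x (σ t) ≤ |t| := by simpa [hσ₀] using hσ_le 0 t
    rcases le_or_gt 0 t with ht | ht
    · rw [abs_of_nonneg ht] at hxσ
      have hpos : busemann δ (σ t) = busemann δ x - t := by
        rw [show σ t = ρ t from joinRays_of_nonneg ht]; exact hbρ t ht
      exact ⟨hpos, busemann_negRay_eq_of_busemann_eq hδ hx hxσ hpos⟩
    · rw [abs_of_neg ht] at hxσ
      have hneg : busemann (negRay δ) (σ t) = busemann (negRay δ) x - -t := by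
        rw [show σ t = ρ' (-t) from joinRays_of_neg ht]; exact hbρ' (-t) (by linarith)
      have hpos := busemann_negRay_eq_of_busemann_eq hδ.reverse
        (by rwa [barrier_negRay]) hxσ hneg
      rw [negRay_negRay] at hpos
      constructor <;> linarith
  refine ⟨σ, fun s t => le_antisymm (hσ_le s t)
    (abs_sub_le_dist_of_busemann_eq hδ.isRay (hb s).1 (hb t).1), hσ₀, ?_, fun t => ?_⟩
  · rw [hσ₀]; exact hx
  · rw [hσ₀, (hb t).1, (hb t).2]
    exact ⟨rfl, rfl⟩

theorem Prec.of_barrier_eq_zero [ProperSpace M] (hM : IsGeodesicSpace M) (hγ : IsLine γ)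
    (huniq : HasUniqueCalibLine γ) {γ₁ γ₂ : ℝ → M} (h₁ : IsLine γ₁) (h₂ : IsLine γ₂)
    (hp₁ : Prec γ₁ γ) (hp₂ : Prec γ₂ γ) (hz : barrier γ₂ (γ₁ 0) = 0) : Prec γ₁ γ₂ := by
  obtain ⟨σ, hσ, hσ₀, hσp⟩ := exists_isLine_prec_of_barrier_eq_zero hM h₂ hz
  rwa [huniq (γ₁ 0) hp₁.1 σ γ₁ hσ h₁ hσ₀ rfl (hσp.trans hp₂ hγ) hp₁] at hσp

/-- for lines `γ₁ ≺ γ` and `γ₂ ≺ γ` (with `γ` having the uniqueness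
property in a proper geodesic space), `γ₁ ∼ γ₂` iff their barrier functions agree. -/
theorem sim_iff_barrier_eq [ProperSpace M] (hM : IsGeodesicSpace M)
    (γ : ℝ → M) (hγ : IsLine γ) (huniq : HasUniqueCalibLine γ)
    (γ₁ γ₂ : ℝ → M) (h₁ : IsLine γ₁) (h₂ : IsLine γ₂)
    (hp₁ : Prec γ₁ γ) (hp₂ : Prec γ₂ γ) :
    (Prec γ₁ γ₂ ∧ Prec γ₂ γ₁) ↔ ∀ x : M, barrier γ₁ x = barrier γ₂ x := by
  refine ⟨fun ⟨h₁₂, h₂₁⟩ x => le_antisymm (h₂₁.barrier_le h₁ x) (h₁₂.barrier_le h₂ x),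
    fun hbar => ⟨?_, ?_⟩⟩
  · exact .of_barrier_eq_zero hM hγ huniq h₁ h₂ hp₁ hp₂ (hbar _ ▸ barrier_apply_self h₁ 0)
  · exact .of_barrier_eq_zero hM hγ huniq h₂ h₁ hp₂ hp₁
      ((hbar _).symm ▸ barrier_apply_self h₂ 0)
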